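/- In a relation algebra, for any subidentity atom x, the element x ; 0' ; x ; 0' ; x is below the identity if and only if x ; 0' ; x is a functional element, where 0' denotes the complement of the identity element. -/

import Mathlib

/-!
For a subidentity `x`, the element `x ; 0' ; x` is its own converse (since `x˘ = x` and
`0'˘ = 0'`), so `(x;0';x)˘ ; (x;0';x) = x;0';x;x;0';x`, and `x;x = x` collapses the middle.
Both facts about subidentities come from `a ≤ a;a˘;a`, an instance of the Dedekind law.
-/

/-- A relation algebra: a Boolean algebra with relative multiplication `comp`,
converse `conv`, and identity element `one'`, satisfying Tarski's axioms. -/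
class RelationAlgebra (α : Type*) extends BooleanAlgebra α where
  comp : α → α → α
  conv : α → α
  one' : α
  comp_assoc : ∀ a b c : α, comp (comp a b) c = comp a (comp b c)
  comp_one' : ∀ a : α, comp a one' = a
  conv_conv : ∀ a : α, conv (conv a) = a
  comp_sup : ∀ a b c : α, comp (a ⊔ b) c = comp a c ⊔ comp b c
  conv_sup : ∀ a b : α, conv (a ⊔ b) = conv a ⊔ conv b
  conv_comp : ∀ a b : α, conv (comp a b) = comp (conv b) (conv a)
  tarski : ∀ a b : α, comp (conv a) (comp a b)ᶜ ≤ bᶜ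

open RelationAlgebra

namespace RelationAlgebra

variable {α : Type*} [RelationAlgebra α]

theorem conv_monotone : Monotone (conv : α → α) := fun a b h => by
  rw [← sup_eq_right.mpr h, conv_sup]
  exact le_sup_left

theorem conv_le_conv_iff {a b : α} : conv a ≤ conv b ↔ a ≤ b :=
  ⟨fun h => by simpa only [conv_conv] using conv_monotone h, fun h => conv_monotone h⟩

def convOrderIso : α ≃o α where
  toFun := conv
  invFun := conv
  left_inv := conv_conv
  right_inv := conv_conv
  map_rel_iff' := conv_le_conv_iff

theorem conv_compl (a : α) : conv aᶜ = (conv a)ᶜ :=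
  map_compl' (convOrderIso : α ≃o α) a

theorem comp_sup_right (a b c : α) : comp a (b ⊔ c) = comp a b ⊔ comp a c := by
  apply convOrderIso.injective
  change conv _ = conv _
  rw [conv_comp, conv_sup, comp_sup, conv_sup, conv_comp, conv_comp]

theorem comp_le_comp_right {a b : α} (h : a ≤ b) (c : α) : comp a c ≤ comp b c := by
  rw [← sup_eq_right.mpr h, comp_sup]
  exact le_sup_left

theorem comp_le_comp_left {b c : α} (h : b ≤ c) (a : α) : comp a b ≤ comp a c := by
  rw [← sup_eq_right.mpr h, comp_sup_right]
  exact le_sup_left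

theorem comp_le_comp {a b c d : α} (hab : a ≤ b) (hcd : c ≤ d) : comp a c ≤ comp b d :=
  (comp_le_comp_right hab c).trans (comp_le_comp_left hcd b)

theorem conv_one'_comp (a : α) : comp (conv one') a = a := by
  rw [← conv_conv a, ← conv_comp, comp_one']

theorem conv_one' : conv (one' : α) = one' := by
  rw [← comp_one' (conv one'), conv_one'_comp]

theorem one'_comp (a : α) : comp one' a = a := by
  rw [← conv_one', conv_one'_comp]

theorem dedekind (a b c : α) : comp a b ⊓ c ≤ comp a (b ⊓ comp (conv a) c) := by
  set e := comp (conv a) c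
  have h_split : comp a b ≤ comp a (b ⊓ e) ⊔ comp a (b ⊓ eᶜ) := by
    rw [← comp_sup_right, ← inf_sup_left, sup_compl_eq_top, inf_top_eq]
  have h_disj : comp a (b ⊓ eᶜ) ≤ cᶜ := by
    have h_tarski := tarski (conv a) c
    rw [conv_conv] at h_tarski
    exact (comp_le_comp_left inf_le_right a).trans h_tarski
  rw [← le_himp_iff, himp_eq]
  exact h_split.trans (sup_le_sup_left h_disj _)

theorem le_comp_conv_comp (a : α) : a ≤ comp a (comp (conv a) a) :=
  calc a = comp a one' ⊓ a := by rw [comp_one', inf_idem]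
    _ ≤ comp a (one' ⊓ comp (conv a) a) := dedekind a one' a
    _ ≤ comp a (comp (conv a) a) := comp_le_comp_left inf_le_right a

theorem le_conv_of_le_one' {x : α} (hx : x ≤ one') : x ≤ conv x :=
  calc x ≤ comp x (comp (conv x) x) := le_comp_conv_comp x
    _ ≤ comp one' (comp (conv x) one') := comp_le_comp hx (comp_le_comp_left hx _)
    _ = conv x := by rw [one'_comp, comp_one']

theorem conv_eq_of_le_one' {x : α} (hx : x ≤ one') : conv x = x := by
  have hx_conv : conv x ≤ one' := conv_one' (α := α) ▸ conv_monotone hx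
  refine le_antisymm ?_ (le_conv_of_le_one' hx)
  simpa only [conv_conv] using le_conv_of_le_one' hx_conv

theorem comp_self_of_le_one' {x : α} (hx : x ≤ one') : comp x x = x := by
  refine le_antisymm ((comp_le_comp_left hx x).trans (comp_one' x).le) ?_
  calc x ≤ comp x (comp (conv x) x) := le_comp_conv_comp x
    _ = comp x (comp x x) := by rw [conv_eq_of_le_one' hx]
    _ ≤ comp x (comp one' x) := comp_le_comp_left (comp_le_comp_right hx x) x
    _ = comp x x := by rw [one'_comp]

theorem conv_comp_compl_one'_comp {x : α} (hx : x ≤ one') :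
    conv (comp (comp x one'ᶜ) x) = comp (comp x one'ᶜ) x := by
  rw [conv_comp, conv_comp, conv_compl, conv_one', conv_eq_of_le_one' hx, comp_assoc]

end RelationAlgebra

theorem stmt_15_general {α : Type*} [RelationAlgebra α] (x : α)
    (hx' : x ≤ one') :
    comp (comp (comp (comp x (one'ᶜ)) x) (one'ᶜ)) x ≤ one' ↔
      comp (conv (comp (comp x (one'ᶜ)) x)) (comp (comp x (one'ᶜ)) x) ≤ one' := by
  rw [conv_comp_compl_one'_comp hx']
  simp only [comp_assoc]
  rw [← comp_assoc x x, comp_self_of_le_one' hx']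

theorem stmt_15 {α : Type*} [RelationAlgebra α] (x : α)
    (hx : IsAtom x) (hx' : x ≤ one') :
    comp (comp (comp (comp x (one'ᶜ)) x) (one'ᶜ)) x ≤ one' ↔
      comp (conv (comp (comp x (one'ᶜ)) x)) (comp (comp x (one'ᶜ)) x) ≤ one' :=
  stmt_15_general x hx'
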